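/- arXiv:1602.07779 — 3 statements merged into one kernel-verified Lean document; each statement's English description precedes it below -/
import Mathlib

section
/- Let G = (V,E) be a directed graph that is locally finite, simple, and strongly connected, and let x, y be two vertices of G. Then the function α ↦ κ_α(x, y) is concave on the interval [0, 1). -/
open Filter Set Topology

variable {V : Type*}

/-- The out-neighborhood of a vertex. -/
def outN (E : V → V → Prop) (x : V) : Set V := {y | E x y}

/-- The in-neighborhood of a vertex. -/
def inN (E : V → V → Prop) (x : V) : Set V := {y | E y x}

/-- The neighborhood `Γ(x) = Γ^in(x) ∪ Γ^out(x)` of a vertex. -/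
def nbhd (E : V → V → Prop) (x : V) : Set V := inN E x ∪ outN E x

/-- The degree `d_x = |Γ(x)|`. -/
noncomputable def deg (E : V → V → Prop) (x : V) : ℕ := (nbhd E x).ncard

/-- The out-degree `d_x^out = |Γ^out(x)|`. -/
noncomputable def outDeg (E : V → V → Prop) (x : V) : ℕ := (outN E x).ncard

/-- The in-degree `d_x^in = |Γ^in(x)|`. -/
noncomputable def inDeg (E : V → V → Prop) (x : V) : ℕ := (inN E x).ncard

/-- A directed graph is locally finite if every vertex has finite degree. -/
def LocFin (E : V → V → Prop) : Prop := ∀ x, (nbhd E x).Finite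

/-- A directed graph (with edges given by a relation, hence no multi-edges) is simple when
it has no loops. -/
def NoLoops (E : V → V → Prop) : Prop := ∀ x, ¬ E x x

/-- `f 0, f 1, …, f n` is a directed walk of length `n` (consecutive pairs are edges). -/
def IsDiWalk (E : V → V → Prop) (n : ℕ) (f : ℕ → V) : Prop := ∀ i, i < n → E (f i) (f (i + 1))

/-- A directed graph is strongly connected if for any two vertices there exists a
directed path (of length at least one) from one to the other. -/
def StronglyConnected (E : V → V → Prop) : Prop :=
  ∀ x y : V, ∃ n, 1 ≤ n ∧ ∃ f : ℕ → V, f 0 = x ∧ f n = y ∧ IsDiWalk E n f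

/-- The distance `d(x,y)`: the length of a shortest directed path from `x` to `y`. -/
noncomputable def ddist (E : V → V → Prop) (x y : V) : ℕ :=
  sInf {n : ℕ | ∃ f : ℕ → V, f 0 = x ∧ f n = y ∧ IsDiWalk E n f}

open Classical in
/-- The probability measure `m_x^α`. -/
noncomputable def mAlpha (E : V → V → Prop) (α : ℝ) (x : V) : V → ℝ := fun v =>
  if v = x then α + (1 - α) * (inDeg E x : ℝ) / (deg E x : ℝ)
  else if E x v then (1 - α) / (deg E x : ℝ)
  else 0

/-- A coupling between `m_x^α` and `m_y^α`: a map `A : V × V → [0,1]` (of finite support)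
whose marginals are `m_x^α` and `m_y^α`. -/
def IsCoupling (E : V → V → Prop) (α : ℝ) (x y : V) (A : V → V → ℝ) : Prop :=
  (Function.support fun p : V × V => A p.1 p.2).Finite ∧
  (∀ u v, A u v ∈ Set.Icc (0 : ℝ) 1) ∧
  (∀ u, ∑ᶠ v, A u v = mAlpha E α x u) ∧
  (∀ v, ∑ᶠ u, A u v = mAlpha E α y v)

/-- The 1-Wasserstein distance `W(m_x^α, m_y^α)`. -/
noncomputable def Wass (E : V → V → Prop) (α : ℝ) (x y : V) : ℝ :=
  sInf {w : ℝ | ∃ A : V → V → ℝ, IsCoupling E α x y A ∧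
    w = ∑ᶠ u, ∑ᶠ v, A u v * (ddist E u v : ℝ)}

/-- The α-Ricci curvature `κ_α(x,y) = 1 − W(m_x^α, m_y^α)/d(x,y)`. -/
noncomputable def ricciAlpha (E : V → V → Prop) (α : ℝ) (x y : V) : ℝ :=
  1 - Wass E α x y / (ddist E x y : ℝ)

/-- `RicciTendsto E x y k` means the Ricci curvature `κ(x,y) = lim_{α→1} κ_α(x,y)/(1−α)`
exists and equals `k`. -/
def RicciTendsto (E : V → V → Prop) (x y : V) (k : ℝ) : Prop :=
  Tendsto (fun α : ℝ => ricciAlpha E α x y / (1 - α)) (𝓝[<] (1 : ℝ)) (𝓝 k)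

/-- A directed graph is Ricci-flat if `κ(x,y) = 0` for every edge `(x,y)`. -/
def RicciFlat (E : V → V → Prop) : Prop := ∀ x y : V, E x y → RicciTendsto E x y 0

/-!
The measure `m_x^α` is affine in `α`, so a convex combination of couplings for the parameters `a`
and `b` is a coupling for the combined parameter, and its transport cost is the same combination
of the two costs. Hence `W(m_x^α, m_y^α)`, an infimum of costs, is convex in `α`, and
`κ_α = 1 - W/d(x,y)` is concave.

Here `m_x^α` need not have mass one (a vertex that is both an in- and an out-neighbour of `x` is
counted twice in `d_x^in + d_x^out`), and couplings exist only when the masses of `m_x^α` and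
`m_y^α` agree. Both masses are affine in `α` and equal `1` at `α = 1`, so on `[0, 1)` they agree
everywhere or nowhere; in the latter case `W` is `sInf ∅ = 0`.
-/

open Function

section Finsum

variable {α β : Type*}

lemma finsum_mul_add_mul {f g : α → ℝ} (hf : (support f).Finite) (hg : (support g).Finite)
    (t s : ℝ) : ∑ᶠ i, (t * f i + s * g i) = t * ∑ᶠ i, f i + s * ∑ᶠ i, g i := by
  rw [finsum_add_distrib (hf.subset (support_mul_subset_right _ _))
    (hg.subset (support_mul_subset_right _ _)), mul_finsum, mul_finsum]

lemma finite_support_mul_add_mul {f g : α → ℝ} (hf : (support f).Finite)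
    (hg : (support g).Finite) (t s : ℝ) : (support fun i => t * f i + s * g i).Finite :=
  (hf.union hg).subset <| (support_add _ _).trans <|
    Set.union_subset_union (support_mul_subset_right _ _) (support_mul_subset_right _ _)

variable {A : α → β → ℝ}

lemma finite_support_row (hA : (support fun p : α × β => A p.1 p.2).Finite) (u : α) :
    (support (A u)).Finite :=
  (hA.image Prod.snd).subset fun v hv => ⟨(u, v), hv, rfl⟩

lemma finite_support_column (hA : (support fun p : α × β => A p.1 p.2).Finite) (v : β) :
    (support fun u => A u v).Finite :=
  (hA.image Prod.fst).subset fun u hu => ⟨(u, v), hu, rfl⟩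

lemma finsum_finsum_comm_of_finite (hA : (support fun p : α × β => A p.1 p.2).Finite) :
    ∑ᶠ u, ∑ᶠ v, A u v = ∑ᶠ v, ∑ᶠ u, A u v :=
  calc ∑ᶠ u, ∑ᶠ v, A u v = ∑ᶠ p : α × β, A p.1 p.2 := (finsum_curry _ hA).symm
    _ = ∑ᶠ q : β × α, A q.2 q.1 := (finsum_comp_equiv (Equiv.prodComm β α)).symm
    _ = ∑ᶠ v, ∑ᶠ u, A u v :=
      finsum_curry (fun q : β × α => A q.2 q.1)
        ((hA.image Prod.swap).subset fun q hq => ⟨q.swap, hq, rfl⟩)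

end Finsum

section Measure

lemma support_mAlpha_subset (E : V → V → Prop) (α : ℝ) (x : V) :
    support (mAlpha E α x) ⊆ insert x (outN E x) := by
  intro v hv
  by_contra hvx
  simp only [Set.mem_insert_iff, outN, Set.mem_ofPred_eq, not_or] at hvx
  simp [mAlpha, hvx.1, hvx.2] at hv

lemma mAlpha_mul_add_mul (E : V → V → Prop) {a b t s : ℝ} (hts : t + s = 1) (x v : V) :
    mAlpha E (t * a + s * b) x v = t * mAlpha E a x v + s * mAlpha E b x v := by
  obtain rfl : s = 1 - t := by linarith
  unfold mAlpha
  split_ifs <;> ring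

lemma finsum_mAlpha_one (E : V → V → Prop) (x : V) : ∑ᶠ v, mAlpha E 1 x v = 1 := by
  rw [finsum_eq_single _ x fun v hv => by simp [mAlpha, hv]]
  simp [mAlpha]

variable {E : V → V → Prop}

lemma LocFin.finite_support_mAlpha (hlf : LocFin E) (α : ℝ) (x : V) :
    (support (mAlpha E α x)).Finite :=
  (((hlf x).subset Set.subset_union_right).insert x).subset (support_mAlpha_subset E α x)

lemma LocFin.inDeg_le_deg (hlf : LocFin E) (x : V) : inDeg E x ≤ deg E x :=
  Set.ncard_le_ncard Set.subset_union_left (hlf x)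

lemma mAlpha_mem_Icc (hlf : LocFin E) {α : ℝ} (hα : α ∈ Set.Icc (0 : ℝ) 1) (x v : V) :
    mAlpha E α x v ∈ Set.Icc (0 : ℝ) 1 := by
  have h1α : 0 ≤ 1 - α := sub_nonneg.2 hα.2
  have hin : (inDeg E x : ℝ) / deg E x ≤ 1 :=
    div_le_one_of_le₀ (by exact_mod_cast hlf.inDeg_le_deg x) (Nat.cast_nonneg _)
  unfold mAlpha
  split_ifs
  · rw [mul_div_assoc]
    exact ⟨add_nonneg hα.1 (mul_nonneg h1α (by positivity)),
      by linarith [mul_le_of_le_one_right h1α hin]⟩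
  · rw [div_eq_mul_inv]
    exact ⟨mul_nonneg h1α (by positivity),
      mul_le_one₀ (sub_le_self 1 hα.1) (by positivity) (Nat.cast_inv_le_one _)⟩
  · simp

lemma finsum_mAlpha (hlf : LocFin E) (α : ℝ) (x : V) :
    ∑ᶠ v, mAlpha E α x v = α + (1 - α) * ∑ᶠ v, mAlpha E 0 x v := by
  calc ∑ᶠ v, mAlpha E α x v = ∑ᶠ v, (α * mAlpha E 1 x v + (1 - α) * mAlpha E 0 x v) :=
        finsum_congr fun v => by
          simpa using mAlpha_mul_add_mul E (a := 1) (b := 0) (add_sub_cancel α 1) x v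
    _ = α + (1 - α) * ∑ᶠ v, mAlpha E 0 x v := by
        rw [finsum_mul_add_mul (hlf.finite_support_mAlpha 1 x) (hlf.finite_support_mAlpha 0 x),
          finsum_mAlpha_one, mul_one]

lemma finsum_mAlpha_eq_iff (hlf : LocFin E) {α : ℝ} (hα : α ≠ 1) (x y : V) :
    ∑ᶠ v, mAlpha E α x v = ∑ᶠ v, mAlpha E α y v ↔
      ∑ᶠ v, mAlpha E 0 x v = ∑ᶠ v, mAlpha E 0 y v := by
  rw [finsum_mAlpha hlf α x, finsum_mAlpha hlf α y, add_right_inj]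
  exact mul_right_inj' (sub_ne_zero.2 hα.symm)

end Measure

section Coupling

variable {E : V → V → Prop} {α : ℝ} {x y : V} {A : V → V → ℝ}

lemma IsCoupling.finsum_mAlpha_eq (hA : IsCoupling E α x y A) :
    ∑ᶠ u, mAlpha E α x u = ∑ᶠ v, mAlpha E α y v := by
  obtain ⟨hfin, -, hrow, hcol⟩ := hA
  simp only [← hrow, ← hcol]
  exact finsum_finsum_comm_of_finite hfin

lemma isCoupling_product (hlf : LocFin E) (hα : α ∈ Set.Icc (0 : ℝ) 1)
    (hxy : ∑ᶠ u, mAlpha E α x u = ∑ᶠ v, mAlpha E α y v) :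
    IsCoupling E α x y fun u v => mAlpha E α x u * mAlpha E α y v / ∑ᶠ w, mAlpha E α y w := by
  set T := ∑ᶠ w, mAlpha E α y w
  have hle : ∀ z v, mAlpha E α z v ≤ ∑ᶠ w, mAlpha E α z w := fun z v =>
    single_le_finsum v (hlf.finite_support_mAlpha α z) fun w => (mAlpha_mem_Icc hlf hα z w).1
  have hT : 0 ≤ T := (mAlpha_mem_Icc hlf hα y y).1.trans (hle y y)
  -- `T = 0` does occur (an isolated vertex at `α = 0`); then both measures vanish and, as
  -- `_ / 0 = 0`, so does the plan.
  have hx0 : ∀ u, T = 0 → mAlpha E α x u = 0 := fun u h =>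
    le_antisymm ((hle x u).trans_eq (hxy.trans h)) (mAlpha_mem_Icc hlf hα x u).1
  have hy0 : ∀ v, T = 0 → mAlpha E α y v = 0 := fun v h =>
    le_antisymm ((hle y v).trans_eq h) (mAlpha_mem_Icc hlf hα y v).1
  refine ⟨?_, fun u v => ⟨?_, ?_⟩, fun u => ?_, fun v => ?_⟩ <;> beta_reduce
  · refine ((hlf.finite_support_mAlpha α x).prod (hlf.finite_support_mAlpha α y)).subset ?_
    rintro ⟨u, v⟩ huv
    exact ⟨left_ne_zero_of_mul (left_ne_zero_of_mul huv),
      right_ne_zero_of_mul (left_ne_zero_of_mul huv)⟩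
  · have := (mAlpha_mem_Icc hlf hα x u).1
    have := (mAlpha_mem_Icc hlf hα y v).1
    positivity
  · rw [mul_div_assoc]
    exact mul_le_one₀ (mAlpha_mem_Icc hlf hα x u).2 (div_nonneg (mAlpha_mem_Icc hlf hα y v).1 hT)
      (div_le_one_of_le₀ (hle y v) hT)
  · simp only [mul_div_right_comm _ (mAlpha E α y _)]
    rw [← mul_finsum, div_mul_cancel_of_imp (hx0 u)]
  · simp only [mul_comm (mAlpha E α x _), mul_div_right_comm (mAlpha E α y v)]
    rw [← mul_finsum, hxy, div_mul_cancel_of_imp (hy0 v)]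

lemma IsCoupling.mul_add_mul {a b t s : ℝ} {B : V → V → ℝ} (hA : IsCoupling E a x y A)
    (hB : IsCoupling E b x y B) (ht : 0 ≤ t) (hs : 0 ≤ s) (hts : t + s = 1) :
    IsCoupling E (t * a + s * b) x y fun u v => t * A u v + s * B u v := by
  obtain ⟨hAfin, hA01, hArow, hAcol⟩ := hA
  obtain ⟨hBfin, hB01, hBrow, hBcol⟩ := hB
  refine ⟨finite_support_mul_add_mul hAfin hBfin t s, fun u v => ⟨?_, ?_⟩, fun u => ?_,
    fun v => ?_⟩ <;> beta_reduce
  · have := (hA01 u v).1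
    have := (hB01 u v).1
    positivity
  · have := mul_le_mul_of_nonneg_left (hA01 u v).2 ht
    have := mul_le_mul_of_nonneg_left (hB01 u v).2 hs
    linarith
  · rw [finsum_mul_add_mul (finite_support_row hAfin u) (finite_support_row hBfin u),
      hArow, hBrow, mAlpha_mul_add_mul E hts]
  · rw [finsum_mul_add_mul (finite_support_column hAfin v) (finite_support_column hBfin v),
      hAcol, hBcol, mAlpha_mul_add_mul E hts]

end Coupling

section Cost

noncomputable def transportCost (E : V → V → Prop) (A : V → V → ℝ) : ℝ :=
  ∑ᶠ u, ∑ᶠ v, A u v * (ddist E u v : ℝ)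

lemma Wass_eq_sInf_transportCost (E : V → V → Prop) (α : ℝ) (x y : V) :
    Wass E α x y = sInf {w | ∃ A, IsCoupling E α x y A ∧ w = transportCost E A} :=
  rfl

variable {E : V → V → Prop}

lemma transportCost_nonneg {α : ℝ} {x y : V} {A : V → V → ℝ} (hA : IsCoupling E α x y A) :
    0 ≤ transportCost E A :=
  finsum_nonneg fun u => finsum_nonneg fun v => mul_nonneg (hA.2.1 u v).1 (Nat.cast_nonneg _)

lemma transportCost_eq_finsum {A : V → V → ℝ} (hA : (support fun p : V × V => A p.1 p.2).Finite) :
    transportCost E A = ∑ᶠ p : V × V, A p.1 p.2 * (ddist E p.1 p.2 : ℝ) :=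
  (finsum_curry (fun p : V × V => A p.1 p.2 * (ddist E p.1 p.2 : ℝ))
    (hA.subset (support_mul_subset_left (fun p : V × V => A p.1 p.2) _))).symm

lemma transportCost_mul_add_mul {A B : V → V → ℝ}
    (hA : (support fun p : V × V => A p.1 p.2).Finite)
    (hB : (support fun p : V × V => B p.1 p.2).Finite) (t s : ℝ) :
    transportCost E (fun u v => t * A u v + s * B u v) =
      t * transportCost E A + s * transportCost E B := by
  rw [transportCost_eq_finsum (finite_support_mul_add_mul hA hB t s), transportCost_eq_finsum hA,
    transportCost_eq_finsum hB, ← finsum_mul_add_mul (hA.subset (support_mul_subset_left _ _))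
      (hB.subset (support_mul_subset_left _ _))]
  exact finsum_congr fun p => by ring

end Cost

open scoped Pointwise in
lemma convexOn_csInf {β : Type*} [AddCommMonoid β] [Module ℝ β] {s : Set β} (hs : Convex ℝ s)
    {S : β → Set ℝ} (hne : ∀ a ∈ s, (S a).Nonempty) (hbdd : ∀ a ∈ s, BddBelow (S a))
    (hmix : ∀ a ∈ s, ∀ b ∈ s, ∀ t u : ℝ, 0 ≤ t → 0 ≤ u → t + u = 1 →
      t • S a + u • S b ⊆ S (t • a + u • b)) :
    ConvexOn ℝ s fun a => sInf (S a) := by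
  refine ⟨hs, fun a ha b hb t u ht hu htu => ?_⟩
  calc sInf (S (t • a + u • b)) ≤ sInf (t • S a + u • S b) :=
        csInf_le_csInf (hbdd _ (hs ha hb ht hu htu))
          ((hne a ha).smul_set.add (hne b hb).smul_set) (hmix a ha b hb t u ht hu htu)
    _ = t • sInf (S a) + u • sInf (S b) := by
        rw [csInf_add (hne a ha).smul_set ((hbdd a ha).smul_of_nonneg ht) (hne b hb).smul_set
          ((hbdd b hb).smul_of_nonneg hu), Real.sInf_smul_of_nonneg ht,
          Real.sInf_smul_of_nonneg hu]

lemma convexOn_Wass {E : V → V → Prop} (hlf : LocFin E) (x y : V) :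
    ConvexOn ℝ (Set.Ico 0 1) fun α => Wass E α x y := by
  by_cases hmass : ∑ᶠ v, mAlpha E 0 x v = ∑ᶠ v, mAlpha E 0 y v
  · refine convexOn_csInf (convex_Ico 0 1) (fun α hα => ?_) (fun α _ => ⟨0, ?_⟩) ?_
    · exact ⟨_, _, isCoupling_product hlf (Set.Ico_subset_Icc_self hα)
        ((finsum_mAlpha_eq_iff hlf hα.2.ne x y).2 hmass), rfl⟩
    · rintro w ⟨A, hA, rfl⟩
      exact transportCost_nonneg hA
    · rintro a - b - t u ht hu htu _ ⟨_, ⟨_, ⟨A, hA, rfl⟩, rfl⟩, _, ⟨_, ⟨B, hB, rfl⟩, rfl⟩, rfl⟩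
      exact ⟨_, hA.mul_add_mul hB ht hu htu, (transportCost_mul_add_mul hA.1 hB.1 t u).symm⟩
  · refine (convexOn_const 0 (convex_Ico 0 1)).congr fun α hα => ?_
    have hno : {w | ∃ A, IsCoupling E α x y A ∧ w = transportCost E A} = ∅ :=
      Set.eq_empty_of_forall_notMem fun _ ⟨_, hA, _⟩ =>
        hmass ((finsum_mAlpha_eq_iff hlf hα.2.ne x y).1 hA.finsum_mAlpha_eq)
    rw [Wass_eq_sInf_transportCost, hno, Real.sInf_empty]

theorem stmt_0_general (E : V → V → Prop) (hlf : LocFin E) (x y : V) :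
    ConcaveOn ℝ (Set.Ico (0 : ℝ) 1) (fun α => ricciAlpha E α x y) := by
  have hW := (convexOn_Wass hlf x y).smul (inv_nonneg.2 (Nat.cast_nonneg (ddist E x y)))
  refine ((concaveOn_const 1 (convex_Ico 0 1)).sub hW).congr fun α _ => ?_
  simp [ricciAlpha, div_eq_inv_mul]

theorem stmt_0 (E : V → V → Prop) (hlf : LocFin E) (hs : NoLoops E) (hsc : StronglyConnected E) (x y : V) :
    ConcaveOn ℝ (Set.Ico (0 : ℝ) 1) (fun α => ricciAlpha E α x y) :=
  stmt_0_general E hlf x y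
end

section
/- Let C_n (n ≥ 3) be the directed cycle: the directed graph with vertex set {x_1, x_2, …, x_n} and edge set {(x_i, x_{i+1}) : 1 ≤ i ≤ n−1} ∪ {(x_n, x_1)}. Then C_n is Ricci-flat; that is, κ(x, y) = 0 for every edge (x, y) of C_n. -/
open Filter Set Topology

variable {V : Type*}

/-- The directed cycle `C_n`: vertices `ZMod n`, with an edge from `i` to `i + 1`. -/
def cycleE (n : ℕ) : ZMod n → ZMod n → Prop := fun i j => j = i + 1

/-!
On the directed cycle the distance from `u` to `v` is the residue `(v - u).val`, and
`m_{x+1}^α` is the translate of `m_x^α` by one step. Pushing every unit of mass one step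
forward is therefore a coupling of cost `1`, and the potential `v ↦ (v - x).val`, which is
`1`-Lipschitz for the directed distance, certifies by weak Kantorovich duality that no coupling
is cheaper. Hence `W(m_x^α, m_{x+1}^α) = 1 = d(x, x + 1)`, so `κ_α(x, x + 1) = 0` for every
`α ∈ [-1, 1]`, and the limit defining `κ(x, x + 1)` is that of the zero function.
-/

theorem ZMod.two_ne_zero_of_three_le {n : ℕ} (hn : 3 ≤ n) : (2 : ZMod n) ≠ 0 := by
  intro h
  have := ZMod.val_two_eq_two_mod n
  rw [h, ZMod.val_zero, Nat.mod_eq_of_lt (by omega)] at this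
  omega

theorem ZMod.self_ne_add_one {n : ℕ} (hn : 2 ≤ n) (x : ZMod n) : x ≠ x + 1 := by
  have : Fact (1 < n) := ⟨hn⟩
  simp

section Transport

variable [Fintype V]

theorem potential_gap_le_transport_cost {μ ν : V → ℝ} {A c : V → V → ℝ}
    (hA : ∀ u v, 0 ≤ A u v) (hrow : ∀ u, ∑ v, A u v = μ u)
    (hcol : ∀ v, ∑ u, A u v = ν v)
    {f : V → ℝ} (hf : ∀ u v, f v - f u ≤ c u v) :
    ∑ v, ν v * f v - ∑ u, μ u * f u ≤ ∑ u, ∑ v, A u v * c u v :=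
  calc ∑ v, ν v * f v - ∑ u, μ u * f u = ∑ u, ∑ v, A u v * (f v - f u) := by
        simp only [mul_sub, Finset.sum_sub_distrib, ← hrow, ← hcol, Finset.sum_mul]
        rw [Finset.sum_comm (f := fun u v => A u v * f v)]
    _ ≤ ∑ u, ∑ v, A u v * c u v :=
        Finset.sum_le_sum fun u _ => Finset.sum_le_sum fun v _ =>
          mul_le_mul_of_nonneg_left (hf u v) (hA u v)

theorem Wass_eq_of_isCoupling_of_potential {E : V → V → Prop} {α : ℝ} {x y : V}
    {A : V → V → ℝ} (hA : IsCoupling E α x y A) {f : V → ℝ}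
    (hf : ∀ u v, f v - f u ≤ ddist E u v)
    (hcost : ∑ u, ∑ v, A u v * (ddist E u v : ℝ) =
      ∑ v, mAlpha E α y v * f v - ∑ u, mAlpha E α x u * f u) :
    Wass E α x y = ∑ v, mAlpha E α y v * f v - ∑ u, mAlpha E α x u * f u := by
  have lower : ∀ w ∈ {w : ℝ | ∃ B : V → V → ℝ, IsCoupling E α x y B ∧
      w = ∑ᶠ u, ∑ᶠ v, B u v * (ddist E u v : ℝ)},
      ∑ v, mAlpha E α y v * f v - ∑ u, mAlpha E α x u * f u ≤ w := by
    rintro w ⟨B, ⟨-, hB, hrow, hcol⟩, rfl⟩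
    simp only [finsum_eq_sum_of_fintype] at hrow hcol ⊢
    exact potential_gap_le_transport_cost (fun u v => (hB u v).1) hrow hcol hf
  have mem : ∑ v, mAlpha E α y v * f v - ∑ u, mAlpha E α x u * f u ∈
      {w : ℝ | ∃ B : V → V → ℝ, IsCoupling E α x y B ∧
        w = ∑ᶠ u, ∑ᶠ v, B u v * (ddist E u v : ℝ)} :=
    ⟨A, hA, by simp only [finsum_eq_sum_of_fintype, hcost]⟩
  exact le_antisymm (csInf_le ⟨_, lower⟩ mem) (le_csInf ⟨_, mem⟩ lower)

end Transport

namespace cycleE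

variable {n : ℕ}

theorem isDiWalk_apply {m : ℕ} {f : ℕ → ZMod n} (hf : IsDiWalk (cycleE n) m f) :
    ∀ i ≤ m, f i = f 0 + i := by
  intro i hi
  induction i with
  | zero => simp
  | succ i ih =>
    rw [hf i hi, ih (by omega)]
    push_cast
    ring

theorem ddist_eq [NeZero n] (u v : ZMod n) : ddist (cycleE n) u v = (v - u).val := by
  have walk : (v - u).val ∈
      {m | ∃ f : ℕ → ZMod n, f 0 = u ∧ f m = v ∧ IsDiWalk (cycleE n) m f} :=
    ⟨fun i => u + i, by simp, by simp, fun i _ => by simp [cycleE, add_assoc]⟩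
  refine le_antisymm (Nat.sInf_le walk) (le_csInf ⟨_, walk⟩ ?_)
  rintro m ⟨f, rfl, rfl, hf⟩
  rw [isDiWalk_apply hf m le_rfl, add_sub_cancel_left, ZMod.val_natCast]
  exact Nat.mod_le m n

theorem ddist_add_one [NeZero n] (hn : 2 ≤ n) (u : ZMod n) :
    ddist (cycleE n) u (u + 1) = 1 := by
  rw [ddist_eq, add_sub_cancel_left, ZMod.val_one_eq_one_mod, Nat.mod_eq_of_lt (by omega)]

theorem deg_eq (hn : 3 ≤ n) (x : ZMod n) : deg (cycleE n) x = 2 := by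
  have : nbhd (cycleE n) x = {x - 1, x + 1} := by
    ext y
    simp only [nbhd, inN, outN, cycleE, Set.mem_union, Set.mem_ofPred_eq, Set.mem_insert_iff,
      Set.mem_singleton_iff, eq_sub_iff_add_eq]
    tauto
  rw [deg, this, Set.ncard_pair]
  intro h
  exact ZMod.two_ne_zero_of_three_le hn (by linear_combination -h)

theorem inDeg_eq (x : ZMod n) : inDeg (cycleE n) x = 1 := by
  have : inN (cycleE n) x = {x - 1} := by
    ext y
    simp only [inN, cycleE, Set.mem_ofPred_eq, Set.mem_singleton_iff, eq_sub_iff_add_eq]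
    tauto
  rw [inDeg, this, Set.ncard_singleton]

theorem mAlpha_eq (hn : 3 ≤ n) (α : ℝ) (x v : ZMod n) :
    mAlpha (cycleE n) α x v =
      if v = x then (1 + α) / 2 else if v = x + 1 then (1 - α) / 2 else 0 := by
  simp only [mAlpha, deg_eq hn, inDeg_eq, cycleE]
  split_ifs <;> first | rfl | (push_cast; ring)

theorem mAlpha_mem_Icc (hn : 3 ≤ n) {α : ℝ} (hα : α ∈ Icc (-1) 1) (x v : ZMod n) :
    mAlpha (cycleE n) α x v ∈ Icc 0 1 := by
  obtain ⟨h₁, h₂⟩ := hα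
  rw [mAlpha_eq hn]
  split_ifs <;> constructor <;> linarith

theorem mAlpha_add_one (hn : 3 ≤ n) (α : ℝ) (x v : ZMod n) :
    mAlpha (cycleE n) α (x + 1) v = mAlpha (cycleE n) α x (v - 1) := by
  simp only [mAlpha_eq hn, sub_eq_iff_eq_add]

theorem sum_mAlpha_mul [NeZero n] (hn : 3 ≤ n) (α : ℝ) (x : ZMod n) (g : ZMod n → ℝ) :
    ∑ v, mAlpha (cycleE n) α x v * g v = (1 + α) / 2 * g x + (1 - α) / 2 * g (x + 1) := by
  have hx : x ≠ x + 1 := ZMod.self_ne_add_one (by omega) x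
  rw [Fintype.sum_eq_add x (x + 1) hx fun v hv => by
      rw [mAlpha_eq hn, if_neg hv.1, if_neg hv.2, zero_mul],
    mAlpha_eq hn, mAlpha_eq hn, if_pos rfl, if_neg hx.symm, if_pos rfl]

noncomputable def shiftCoupling (α : ℝ) (x : ZMod n) (u v : ZMod n) : ℝ :=
  if v = u + 1 then mAlpha (cycleE n) α x u else 0

theorem isCoupling_shiftCoupling [NeZero n] (hn : 3 ≤ n) {α : ℝ} (hα : α ∈ Icc (-1) 1)
    (x : ZMod n) : IsCoupling (cycleE n) α x (x + 1) (shiftCoupling α x) := by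
  refine ⟨Set.toFinite _, fun u v => ?_, fun u => ?_, fun v => ?_⟩
  · unfold shiftCoupling
    split_ifs
    exacts [mAlpha_mem_Icc hn hα x u, ⟨le_rfl, zero_le_one⟩]
  · simp only [shiftCoupling, finsum_eq_sum_of_fintype, Finset.sum_ite_eq', Finset.mem_univ,
      if_true]
  · simp only [shiftCoupling, finsum_eq_sum_of_fintype, mAlpha_add_one hn, eq_comm (a := v),
      ← eq_sub_iff_add_eq, Finset.sum_ite_eq', Finset.mem_univ, if_true]

theorem Wass_eq_one [NeZero n] (hn : 3 ≤ n) {α : ℝ} (hα : α ∈ Icc (-1) 1) (x : ZMod n) :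
    Wass (cycleE n) α x (x + 1) = 1 := by
  have step : ∀ u : ZMod n, ddist (cycleE n) u (u + 1) = 1 := ddist_add_one (by omega)
  have potential : ∀ u v : ZMod n,
      ((v - x).val : ℝ) - (u - x).val ≤ ddist (cycleE n) u v := by
    intro u v
    rw [ddist_eq, sub_le_iff_le_add', ← Nat.cast_add, Nat.cast_le]
    simpa using ZMod.val_add_le (u - x) (v - u)
  have val_two : ((x + 1 + 1 - x).val : ℝ) = 2 := by
    rw [show x + 1 + 1 - x = 2 by ring, ZMod.val_two_eq_two_mod, Nat.mod_eq_of_lt (by omega)]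
    norm_num
  have gap : ∑ v, mAlpha (cycleE n) α (x + 1) v * ((v - x).val : ℝ) -
      ∑ u, mAlpha (cycleE n) α x u * ((u - x).val : ℝ) = 1 := by
    rw [sum_mAlpha_mul hn, sum_mAlpha_mul hn, ← ddist_eq, step, val_two,
      sub_self, ZMod.val_zero]
    push_cast
    ring
  have cost : ∑ u, ∑ v, shiftCoupling α x u v * (ddist (cycleE n) u v : ℝ) = 1 := by
    simp only [shiftCoupling, ite_mul, zero_mul, Finset.sum_ite_eq', Finset.mem_univ, if_true,
      step, Nat.cast_one, sum_mAlpha_mul hn α x fun _ => 1]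
    ring
  rw [← gap]
  exact Wass_eq_of_isCoupling_of_potential (isCoupling_shiftCoupling hn hα x) potential
    (cost.trans gap.symm)

theorem ricciAlpha_eq_zero [NeZero n] (hn : 3 ≤ n) {α : ℝ} (hα : α ∈ Icc (-1) 1)
    (x : ZMod n) : ricciAlpha (cycleE n) α x (x + 1) = 0 := by
  rw [ricciAlpha, Wass_eq_one hn hα, ddist_add_one (by omega), Nat.cast_one, div_one, sub_self]

end cycleE

theorem stmt_6 (n : ℕ) (hn : 3 ≤ n) : RicciFlat (cycleE n) := by
  have : NeZero n := ⟨by omega⟩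
  rintro x _ rfl
  refine tendsto_const_nhds.congr' ?_
  filter_upwards [Ioo_mem_nhdsLT (show (-1 : ℝ) < 1 by norm_num)] with α hα
  rw [cycleE.ricciAlpha_eq_zero hn ⟨hα.1.le, hα.2.le⟩, zero_div]
end

section
/- Let G = (V,E) be a locally finite, simple, strongly connected directed d-regular graph satisfying condition (a): for every edge (x, y) ∈ E, Γ^out(x) ∩ Γ^out(y) = ∅, and suppose d_u^out = 1 for every vertex u. Then G is Ricci-flat if and only if G is a directed cycle (i.e., G is isomorphic to the graph with vertices {x_1, …, x_n} and edges {(x_i, x_{i+1}) : 1 ≤ i ≤ n−1} ∪ {(x_n, x_1)} for some n ≥ 3). -/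
open Filter Set Topology

variable {V : Type*}

/-! Out-degree one makes `E` the graph of a map `g`, and strong connectivity makes `V` a single
periodic `g`-orbit, so `E` is a directed cycle on `ZMod p`, with `p ≥ 2` as there are no loops.
On such a cycle `m_x^α` lives on `{x, x + 1}`, and one transport plan serves every edge `x → y`
with `z = y + 1`: move `α` from `x` to `y`, leave `β = (1 - α) / d` at `y`, move `β` from `x`
to `z`. For `p ≥ 3` its cost is `1 = d(x, y)`, which the `1`-Lipschitz function `d(x, ·)` shows
to be optimal, so `κ_α(x, y) = 0`. For `p = 2` we have `z = x`, the plan costs only `α`, and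
`κ_α(x, y) / (1 - α) ≥ 1`. -/

def IsCycleLabeling {n : ℕ} (E : V → V → Prop) (e : V ≃ ZMod n) : Prop :=
  ∀ u v, E u v ↔ e v = e u + 1

open Function in
lemma exists_equiv_zmod_minimalPeriod {g : V → V} {x : V} (hx : 0 < minimalPeriod g x)
    (hreach : ∀ u, ∃ m, g^[m] x = u) :
    ∃ e : V ≃ ZMod (minimalPeriod g x), ∀ u, e (g u) = e u + 1 := by
  set p := minimalPeriod g x
  have : NeZero p := ⟨hx.ne'⟩
  let φ : ZMod p → V := fun k => g^[k.val] x
  have hφ : ∀ m : ℕ, φ m = g^[m] x := fun m => by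
    simp only [φ, ZMod.val_natCast]
    exact iterate_mod_minimalPeriod_eq
  have hinj : Injective φ := fun k l h =>
    ZMod.val_injective p (iterate_injOn_Iio_minimalPeriod (ZMod.val_lt k) (ZMod.val_lt l) h)
  have hsurj : Surjective φ := fun u =>
    let ⟨m, hm⟩ := hreach u; ⟨m, (hφ m).trans hm⟩
  let e := Equiv.ofBijective φ ⟨hinj, hsurj⟩
  refine ⟨e.symm, fun u => ?_⟩
  obtain ⟨k, rfl⟩ := e.surjective u
  rw [e.symm_apply_apply, e.symm_apply_eq]
  change g (φ k) = φ (k + 1)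
  rw [← ZMod.natCast_zmod_val k, hφ, ← Nat.cast_succ, hφ, iterate_succ_apply']

lemma IsDiWalk.eq_iterate {E : V → V → Prop} {g : V → V} (hg : ∀ u v, E u v ↔ v = g u) :
    ∀ {n : ℕ} {f : ℕ → V}, IsDiWalk E n f → f n = g^[n] (f 0)
  | 0, _, _ => rfl
  | n + 1, f, hf => by
    rw [Function.iterate_succ_apply', ← IsDiWalk.eq_iterate hg fun i hi => hf i (by omega)]
    exact (hg _ _).1 (hf n n.lt_succ_self)

theorem exists_isCycleLabeling [Nonempty V] {E : V → V → Prop} (hs : NoLoops E)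
    (hsc : StronglyConnected E) (hout : ∀ u, outDeg E u = 1) :
    ∃ n, 2 ≤ n ∧ ∃ e : V ≃ ZMod n, IsCycleLabeling E e := by
  choose g hg using fun u => Set.ncard_eq_one.1 (hout u)
  have hE : ∀ u v, E u v ↔ v = g u := fun u v => by simpa [outN] using Set.ext_iff.1 (hg u) v
  have hreach : ∀ x y, ∃ m, 1 ≤ m ∧ g^[m] x = y := fun x y => by
    obtain ⟨m, hm, f, rfl, rfl, hf⟩ := hsc x y
    exact ⟨m, hm, (hf.eq_iterate hE).symm⟩
  obtain ⟨x⟩ := ‹Nonempty V›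
  obtain ⟨m, hm, hmx⟩ := hreach x x
  have hpos : 0 < Function.minimalPeriod g x := Function.IsPeriodicPt.minimalPeriod_pos hm hmx
  have hne1 : Function.minimalPeriod g x ≠ 1 := fun h =>
    hs x ((hE x x).2 (Function.minimalPeriod_eq_one_iff_isFixedPt.1 h).symm)
  obtain ⟨e, he⟩ :=
    exists_equiv_zmod_minimalPeriod hpos fun u => (hreach x u).imp fun _ => And.right
  refine ⟨_, by omega, e, fun u v => ?_⟩
  rw [hE, ← he, e.apply_eq_iff_eq]

lemma ddist_self (E : V → V → Prop) (x : V) : ddist E x x = 0 :=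
  Nat.sInf_eq_zero.2 (Or.inl ⟨fun _ => x, rfl, rfl, fun _ h => absurd h (Nat.not_lt_zero _)⟩)

open Classical in
lemma finsum_ite_ite_mul {x y : V} (hxy : x ≠ y) (p q : ℝ) (f : V → ℝ) :
    ∑ᶠ v, (if v = x then p else if v = y then q else 0) * f v = p * f x + q * f y := by
  rw [finsum_eq_sum_of_support_subset _ (s := {x, y}) fun v hv => by
    simp only [Function.mem_support] at hv; grind, Finset.sum_pair hxy]
  simp [hxy.symm]

open Classical in
lemma mAlpha_eq_of_forall_adj_iff {E : V → V → Prop} {α : ℝ} {x y : V} (hin : inDeg E x = 1)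
    (hout : ∀ v, E x v ↔ v = y) (v : V) :
    mAlpha E α x v =
      if v = x then α + (1 - α) / deg E x else if v = y then (1 - α) / deg E x else 0 := by
  simp only [mAlpha, hin, hout, Nat.cast_one, mul_one]

section Transport

variable {E : V → V → Prop} {α : ℝ} {x y : V} {A : V → V → ℝ}

lemma finsum_finsum_eq_finsum_prod (hA : (Function.support fun p : V × V => A p.1 p.2).Finite)
    (g : V → V → ℝ) :
    ∑ᶠ u, ∑ᶠ v, A u v * g u v = ∑ᶠ p : V × V, A p.1 p.2 * g p.1 p.2 :=
  (finsum_curry (fun p : V × V => A p.1 p.2 * g p.1 p.2)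
    (hA.subset fun _ hp => left_ne_zero_of_mul hp)).symm

lemma finsum_marginal_mul (hA : (Function.support fun p : V × V => A p.1 p.2).Finite)
    (f : V → ℝ) :
    ∑ᶠ u, (∑ᶠ v, A u v) * f u = ∑ᶠ p : V × V, A p.1 p.2 * f p.1 := by
  rw [← finsum_finsum_eq_finsum_prod hA fun u _ => f u]
  exact finsum_congr fun u => finsum_mul' _ _ (hA.preimage (Prod.mk_right_injective u).injOn)

lemma IsCoupling.sub_le_cost (hA : IsCoupling E α x y A) (f : V → ℝ)
    (hf : ∀ u v, f v - f u ≤ ddist E u v) :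
    ∑ᶠ v, mAlpha E α y v * f v - ∑ᶠ u, mAlpha E α x u * f u ≤
      ∑ᶠ u, ∑ᶠ v, A u v * ddist E u v := by
  obtain ⟨hfin, hA01, hrow, hcol⟩ := hA
  have hsupp : ∀ g : V × V → ℝ,
      (Function.support fun p : V × V => A p.1 p.2 * g p).Finite :=
    fun g => hfin.subset fun p hp => left_ne_zero_of_mul hp
  have hcol' : ∑ᶠ v, mAlpha E α y v * f v = ∑ᶠ p : V × V, A p.1 p.2 * f p.2 := by
    simp_rw [← hcol]
    rw [finsum_marginal_mul (A := fun u v => A v u) (hfin.preimage Prod.swap_injective.injOn) f]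
    exact finsum_comp_equiv (Equiv.prodComm V V) (f := fun p => A p.1 p.2 * f p.2)
  have hrow' : ∑ᶠ u, mAlpha E α x u * f u = ∑ᶠ p : V × V, A p.1 p.2 * f p.1 := by
    simp_rw [← hrow]
    exact finsum_marginal_mul hfin f
  rw [hcol', hrow', finsum_finsum_eq_finsum_prod hfin, ← finsum_sub_distrib (hsupp _) (hsupp _)]
  simp_rw [← mul_sub]
  exact finsum_le_finsum' (hsupp _) (hsupp _) fun p =>
    mul_le_mul_of_nonneg_left (hf p.1 p.2) (hA01 p.1 p.2).1

lemma Wass_le_cost (hA : IsCoupling E α x y A) :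
    Wass E α x y ≤ ∑ᶠ u, ∑ᶠ v, A u v * ddist E u v := by
  refine csInf_le ⟨0, ?_⟩ ⟨A, hA, rfl⟩
  rintro w ⟨B, hB, rfl⟩
  exact finsum_nonneg fun u => finsum_nonneg fun v => mul_nonneg (hB.2.1 u v).1 (Nat.cast_nonneg _)

lemma IsCoupling.le_Wass (hA : IsCoupling E α x y A) (f : V → ℝ)
    (hf : ∀ u v, f v - f u ≤ ddist E u v) :
    ∑ᶠ v, mAlpha E α y v * f v - ∑ᶠ u, mAlpha E α x u * f u ≤ Wass E α x y := by
  refine le_csInf ⟨_, A, hA, rfl⟩ ?_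
  rintro w ⟨B, hB, rfl⟩
  exact hB.sub_le_cost f hf

end Transport

section Plan

variable [DecidableEq V] {ι : Type*} [Fintype ι] (a b : ι → V) (c : ι → ℝ)

noncomputable def transportPlan : V → V → ℝ :=
  fun u v => ∑ i, if u = a i ∧ v = b i then c i else 0

lemma transportPlan_support_finite :
    (Function.support fun p : V × V => transportPlan a b c p.1 p.2).Finite := by
  refine (Set.finite_range fun i => (a i, b i)).subset fun p hp => ?_
  obtain ⟨i, -, hi⟩ := Finset.exists_ne_zero_of_sum_ne_zero hp
  exact ⟨i, by grind⟩

lemma finsum_transportPlan_left (u : V) :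
    ∑ᶠ v, transportPlan a b c u v = ∑ i, if u = a i then c i else 0 := by
  simp only [transportPlan]
  rw [finsum_sum_comm _ _ fun i _ =>
    (Set.finite_singleton (b i)).subset fun v hv => by
      simp only [Function.mem_support] at hv; grind]
  refine Finset.sum_congr rfl fun i _ => ?_
  rw [finsum_eq_single _ (b i) fun v hv => by grind]
  grind

lemma finsum_transportPlan_right (v : V) :
    ∑ᶠ u, transportPlan a b c u v = ∑ i, if v = b i then c i else 0 := by
  simp only [transportPlan]
  rw [finsum_sum_comm _ _ fun i _ =>
    (Set.finite_singleton (a i)).subset fun u hu => by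
      simp only [Function.mem_support] at hu; grind]
  refine Finset.sum_congr rfl fun i _ => ?_
  rw [finsum_eq_single _ (a i) fun u hu => by grind]
  grind

lemma finsum_finsum_transportPlan_mul (g : V → V → ℝ) :
    ∑ᶠ u, ∑ᶠ v, transportPlan a b c u v * g u v = ∑ i, c i * g (a i) (b i) := by
  rw [finsum_finsum_eq_finsum_prod (transportPlan_support_finite a b c)]
  simp only [transportPlan, Finset.sum_mul]
  rw [finsum_sum_comm _ _ fun i _ =>
    (Set.finite_singleton (a i, b i)).subset fun p hp => by
      simp only [Function.mem_support] at hp; grind]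
  refine Finset.sum_congr rfl fun i _ => ?_
  rw [finsum_eq_single _ (a i, b i) fun p hp => by grind]
  simp

end Plan

section ThreePoint

variable {E : V → V → Prop} {α β : ℝ} {x y z : V}

open Classical in
lemma isCoupling_transportPlan (hxy : x ≠ y) (hyz : y ≠ z) (hα : 0 ≤ α) (hβ : 0 ≤ β)
    (hαβ : α + β ≤ 1)
    (hx : ∀ v, mAlpha E α x v = if v = x then α + β else if v = y then β else 0)
    (hy : ∀ v, mAlpha E α y v = if v = y then α + β else if v = z then β else 0) :
    IsCoupling E α x y (transportPlan ![x, y, x] ![y, y, z] ![α, β, β]) := by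
  refine ⟨transportPlan_support_finite _ _ _, fun u v => ?_, fun u => ?_, fun v => ?_⟩
  · simp only [transportPlan, Fin.sum_univ_three, Matrix.cons_val_zero, Matrix.cons_val_one,
      Matrix.cons_val, mem_Icc]
    split_ifs <;> grind
  · rw [finsum_transportPlan_left, hx]
    simp only [Fin.sum_univ_three, Matrix.cons_val_zero, Matrix.cons_val_one, Matrix.cons_val]
    split_ifs <;> grind
  · rw [finsum_transportPlan_right, hy]
    simp only [Fin.sum_univ_three, Matrix.cons_val_zero, Matrix.cons_val_one, Matrix.cons_val]
    split_ifs <;> grind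

open Classical in
lemma Wass_le_of_mAlpha_eq (hxy : x ≠ y) (hyz : y ≠ z) (hα : 0 ≤ α) (hβ : 0 ≤ β)
    (hαβ : α + β ≤ 1)
    (hx : ∀ v, mAlpha E α x v = if v = x then α + β else if v = y then β else 0)
    (hy : ∀ v, mAlpha E α y v = if v = y then α + β else if v = z then β else 0) :
    Wass E α x y ≤ α * ddist E x y + β * ddist E x z := by
  refine (Wass_le_cost (isCoupling_transportPlan hxy hyz hα hβ hαβ hx hy)).trans_eq ?_
  simp [finsum_finsum_transportPlan_mul, Fin.sum_univ_three, ddist_self]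

open Classical in
lemma le_Wass_of_mAlpha_eq (hxy : x ≠ y) (hyz : y ≠ z) (hα : 0 ≤ α) (hβ : 0 ≤ β)
    (hαβ : α + β ≤ 1)
    (hx : ∀ v, mAlpha E α x v = if v = x then α + β else if v = y then β else 0)
    (hy : ∀ v, mAlpha E α y v = if v = y then α + β else if v = z then β else 0)
    (f : V → ℝ) (hf : ∀ u v, f v - f u ≤ ddist E u v) :
    (α + β) * f y + β * f z - ((α + β) * f x + β * f y) ≤ Wass E α x y := by
  have := (isCoupling_transportPlan hxy hyz hα hβ hαβ hx hy).le_Wass f hf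
  simp_rw [hx, hy, finsum_ite_ite_mul hxy, finsum_ite_ite_mul hyz] at this
  exact this

end ThreePoint

namespace IsCycleLabeling

variable {n : ℕ} {E : V → V → Prop} {e : V ≃ ZMod n} {α : ℝ} {x y : V}

lemma apply_end_of_isDiWalk (hE : IsCycleLabeling E e) :
    ∀ {m : ℕ} {f : ℕ → V}, IsDiWalk E m f → e (f m) = e (f 0) + m
  | 0, _, _ => by simp
  | m + 1, f, hf => by
    rw [(hE _ _).1 (hf m m.lt_succ_self), hE.apply_end_of_isDiWalk fun i hi => hf i (by omega)]
    push_cast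
    ring

lemma ddist_eq [NeZero n] (hE : IsCycleLabeling E e) (u v : V) :
    ddist E u v = (e v - e u).val := by
  have hwalk :
      (e v - e u).val ∈ {m | ∃ f : ℕ → V, f 0 = u ∧ f m = v ∧ IsDiWalk E m f} :=
    ⟨fun i => e.symm (e u + i), by simp, by simp, fun i _ => by
      rw [hE, Equiv.apply_symm_apply, Equiv.apply_symm_apply]; push_cast; ring⟩
  refine le_antisymm (Nat.sInf_le hwalk) (le_csInf ⟨_, hwalk⟩ ?_)
  rintro m ⟨f, rfl, rfl, hf⟩
  rw [hE.apply_end_of_isDiWalk hf, add_sub_cancel_left, ZMod.val_natCast]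
  exact Nat.mod_le m n

lemma ddist_le_add [NeZero n] (hE : IsCycleLabeling E e) (x u v : V) :
    ddist E x v ≤ ddist E x u + ddist E u v := by
  rw [hE.ddist_eq, hE.ddist_eq, hE.ddist_eq, add_comm]
  simpa using ZMod.val_add_le (e v - e u) (e u - e x)

lemma outN_eq (hE : IsCycleLabeling E e) (x : V) : outN E x = {e.symm (e x + 1)} := by
  ext v
  rw [Set.mem_singleton_iff, Equiv.eq_symm_apply]
  exact hE x v

lemma inN_eq (hE : IsCycleLabeling E e) (x : V) : inN E x = {e.symm (e x - 1)} := by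
  ext v
  rw [Set.mem_singleton_iff, Equiv.eq_symm_apply, eq_sub_iff_add_eq, eq_comm]
  exact hE v x

lemma inDeg_eq_one (hE : IsCycleLabeling E e) (x : V) : inDeg E x = 1 := by
  rw [inDeg, hE.inN_eq, Set.ncard_singleton]

lemma deg_eq_two (hE : IsCycleLabeling E e) (hn : 3 ≤ n) (x : V) : deg E x = 2 := by
  rw [deg, nbhd, hE.inN_eq, hE.outN_eq, Set.singleton_union, Set.ncard_pair]
  rw [Ne, e.symm.apply_eq_iff_eq, sub_eq_iff_eq_add, add_assoc, left_eq_add]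
  intro h
  have := congrArg ZMod.val h
  rw [one_add_one_eq_two, ZMod.val_ofNat_of_lt (show 2 < n by omega)] at this
  simp at this

lemma deg_eq_one {e : V ≃ ZMod 2} (hE : IsCycleLabeling E e) (x : V) : deg E x = 1 := by
  rw [deg, nbhd, hE.inN_eq, hE.outN_eq, show e x - 1 = e x + 1 by grind, Set.union_self,
    Set.ncard_singleton]

open Classical in
lemma mAlpha_eq (hE : IsCycleLabeling E e) (hxy : E x y) (v : V) :
    mAlpha E α x v =
      if v = x then α + (1 - α) / deg E x else if v = y then (1 - α) / deg E x else 0 :=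
  mAlpha_eq_of_forall_adj_iff (hE.inDeg_eq_one x)
    (fun w => by rw [hE, ← (hE x y).1 hxy, e.apply_eq_iff_eq]) v

lemma ddist_eq_one (hE : IsCycleLabeling E e) (hn : 2 ≤ n) (hxy : E x y) : ddist E x y = 1 := by
  have : NeZero n := ⟨by omega⟩
  rw [hE.ddist_eq, (hE x y).1 hxy, add_sub_cancel_left, ZMod.val_one'' (by omega)]

lemma ne_of_adj (hE : IsCycleLabeling E e) (hn : 2 ≤ n) (hxy : E x y) : x ≠ y := by
  rintro rfl
  exact zero_ne_one ((ddist_self E x).symm.trans (hE.ddist_eq_one hn hxy))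

lemma Wass_eq_one (hE : IsCycleLabeling E e) (hn : 3 ≤ n) (hα : α ∈ Ico 0 1) (hxy : E x y) :
    Wass E α x y = 1 := by
  have : NeZero n := ⟨by omega⟩
  set z := e.symm (e y + 1)
  have hyz : E y z := (hE y z).2 (e.apply_symm_apply _)
  have hdxy := hE.ddist_eq_one (by omega) hxy
  have hdxz : ddist E x z = 2 := by
    rw [hE.ddist_eq, e.apply_symm_apply, (hE x y).1 hxy, add_assoc, add_sub_cancel_left,
      one_add_one_eq_two, ZMod.val_ofNat_of_lt (show 2 < n by omega)]
  have hx := hE.mAlpha_eq (α := α) hxy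
  have hy := hE.mAlpha_eq (α := α) hyz
  simp only [hE.deg_eq_two hn, Nat.cast_ofNat] at hx hy
  have hxy' := hE.ne_of_adj (by omega) hxy
  have hyz' := hE.ne_of_adj (by omega) hyz
  obtain ⟨hα0, hα1⟩ := hα
  refine le_antisymm ?_ ?_
  · calc Wass E α x y ≤ α * ddist E x y + (1 - α) / 2 * ddist E x z :=
          Wass_le_of_mAlpha_eq hxy' hyz' hα0 (by linarith) (by linarith) hx hy
      _ = 1 := by rw [hdxy, hdxz]; push_cast; ring
  · have := le_Wass_of_mAlpha_eq hxy' hyz' hα0 (by linarith) (by linarith) hx hy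
      (fun v => ddist E x v) fun u v => by
        rw [sub_le_iff_le_add']; exact_mod_cast hE.ddist_le_add x u v
    simp only [ddist_self, hdxy, hdxz] at this
    push_cast at this
    linarith

theorem ricciFlat (hE : IsCycleLabeling E e) (hn : 3 ≤ n) : RicciFlat E := by
  intro x y hxy
  refine tendsto_const_nhds.congr' ?_
  filter_upwards [Ico_mem_nhdsLT (show (0 : ℝ) < 1 by norm_num)] with α hα
  rw [ricciAlpha, hE.Wass_eq_one hn hα hxy, hE.ddist_eq_one (by omega) hxy]
  simp

theorem not_ricciFlat {e : V ≃ ZMod 2} (hE : IsCycleLabeling E e) : ¬ RicciFlat E := by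
  intro hflat
  set x := e.symm 0
  set y := e.symm 1
  have hxy : E x y := (hE x y).2 (by simp [x, y])
  have hyx : E y x := (hE y x).2 (by simp [x, y]; decide)
  have hdxy := hE.ddist_eq_one le_rfl hxy
  have hW : ∀ α ∈ Ico (0 : ℝ) 1, Wass E α x y ≤ α := fun α hα => by
    have hx := hE.mAlpha_eq (α := α) hxy
    have hy := hE.mAlpha_eq (α := α) hyx
    simp only [hE.deg_eq_one, Nat.cast_one, div_one] at hx hy
    calc Wass E α x y ≤ α * ddist E x y + (1 - α) * ddist E x x :=
          Wass_le_of_mAlpha_eq (hE.ne_of_adj le_rfl hxy) (hE.ne_of_adj le_rfl hyx) hα.1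
            (by linarith [hα.2]) (by linarith) hx hy
      _ = α := by simp [hdxy, ddist_self]
  have hlim : 1 ≤ (0 : ℝ) := by
    refine ge_of_tendsto (hflat x y hxy) ?_
    filter_upwards [Ico_mem_nhdsLT (show (0 : ℝ) < 1 by norm_num)] with α hα
    rw [ricciAlpha, hdxy, Nat.cast_one, div_one, le_div_iff₀ (by linarith [hα.2])]
    linarith [hW α hα]
  norm_num at hlim

end IsCycleLabeling

theorem stmt_15_general (E : V → V → Prop) [Nonempty V] (hs : NoLoops E) (hsc : StronglyConnected E)
    (hout1 : ∀ u : V, outDeg E u = 1) :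
    RicciFlat E ↔
      ∃ n : ℕ, 3 ≤ n ∧ ∃ e : V ≃ ZMod n, ∀ u v : V, E u v ↔ e v = e u + 1 := by
  obtain ⟨n, hn, e, hE⟩ := exists_isCycleLabeling hs hsc hout1
  refine ⟨fun hflat => ⟨n, ?_, e, hE⟩, fun ⟨m, hm, e', hE'⟩ => IsCycleLabeling.ricciFlat hE' hm⟩
  rcases hn.eq_or_lt with rfl | h3
  · exact absurd hflat hE.not_ricciFlat
  · exact h3

theorem stmt_15 (E : V → V → Prop) [Nonempty V] (hlf : LocFin E) (hs : NoLoops E) (hsc : StronglyConnected E)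
    (d : ℕ) (hreg : ∀ v : V, deg E v = d)
    (ha : ∀ x y : V, E x y → outN E x ∩ outN E y = ∅)
    (hout1 : ∀ u : V, outDeg E u = 1) :
    RicciFlat E ↔
      ∃ n : ℕ, 3 ≤ n ∧ ∃ e : V ≃ ZMod n, ∀ u v : V, E u v ↔ e v = e u + 1 :=
  stmt_15_general E hs hsc hout1
end
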